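/- Let C ∉ S₀ be a metabolite for which some explanation with respect to S₀ and R exists. A rule Θ ∈ R is essential in S₀ for C if and only if every χ-path from S₀ in Gr((R,S₀)) leading to C contains a transition labeled by Θ. -/

import Mathlib

/-- A biochemical rule: either binary `A₁ ∘ A₂ → C` or unary `A → C`. -/
inductive Rule (M : Type) where
  | binary (a₁ a₂ c : M) : Rule M
  | unary (a c : M) : Rule M
  deriving DecidableEq

namespace Rule

/-- The conclusion (produced metabolite) of a rule. -/
def concl {M : Type} : Rule M → M
  | .binary _ _ c => c
  | .unary _ c => c

/-- The premises of a rule, as a finite set. -/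
def premises {M : Type} [DecidableEq M] : Rule M → Finset M
  | .binary a₁ a₂ _ => {a₁, a₂}
  | .unary a _ => {a}

/-- The premises of a rule, as a set. -/
def premSet {M : Type} : Rule M → Set M
  | .binary a₁ a₂ _ => {a₁, a₂}
  | .unary a _ => {a}

end Rule

/-- Explanation trees: leaves `C[]`, unary nodes `C_r[E]`, binary nodes `C_r[E₁,E₂]`. -/
inductive Expl (M : Type) where
  | leaf (c : M) : Expl M
  | node1 (r : Rule M) (e : Expl M) : Expl M
  | node2 (r : Rule M) (e₁ e₂ : Expl M) : Expl M

namespace Expl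

/-- The root metabolite of an explanation. -/
def root {M : Type} : Expl M → M
  | .leaf c => c
  | .node1 r _ => r.concl
  | .node2 r _ _ => r.concl

/-- `ℛ(E)`: the set of rules used by an explanation. -/
def rules {M : Type} : Expl M → Set (Rule M)
  | .leaf _ => ∅
  | .node1 r e => {r} ∪ e.rules
  | .node2 r e₁ e₂ => {r} ∪ e₁.rules ∪ e₂.rules

/-- `ℳ(E)`: the set of metabolites required by an explanation. -/
def mets {M : Type} : Expl M → Set M
  | .leaf c => {c}
  | .node1 r e => r.premSet ∪ e.mets
  | .node2 r e₁ e₂ => r.premSet ∪ e₁.mets ∪ e₂.mets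

/-- Subexplanation (subtree) relation. -/
inductive Sub {M : Type} : Expl M → Expl M → Prop where
  | refl (e : Expl M) : Sub e e
  | node1 {e e' : Expl M} {r : Rule M} : Sub e e' → Sub e (.node1 r e')
  | left {e e₁ e₂ : Expl M} {r : Rule M} : Sub e e₁ → Sub e (.node2 r e₁ e₂)
  | right {e e₁ e₂ : Expl M} {r : Rule M} : Sub e e₂ → Sub e (.node2 r e₁ e₂)

/-- An explanation is uniform if any two subexplanations with the same root metabolite coincide. -/
def Uniform {M : Type} (E : Expl M) : Prop :=
  ∀ e₁ e₂ : Expl M, Sub e₁ E → Sub e₂ E → root e₁ = root e₂ → e₁ = e₂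

end Expl

/-- `IsExpl S R C E`: `E` is an explanation for `C` w.r.t. initial solution `S` and m-network `R`. -/
inductive IsExpl {M : Type} (S : Finset M) (R : Finset (Rule M)) : M → Expl M → Prop where
  | leaf {c : M} : c ∈ S → IsExpl S R c (.leaf c)
  | node1 {a c : M} {e : Expl M} : Rule.unary a c ∈ R → IsExpl S R a e →
      IsExpl S R c (.node1 (Rule.unary a c) e)
  | node2 {a₁ a₂ c : M} {e₁ e₂ : Expl M} : Rule.binary a₁ a₂ c ∈ R →
      IsExpl S R a₁ e₁ → IsExpl S R a₂ e₂ →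
      IsExpl S R c (.node2 (Rule.binary a₁ a₂ c) e₁ e₂)

/-- A rule `r ∈ R` is essential in `S` for `C`. -/
def Essential {M : Type} [DecidableEq M] (S : Finset M) (R : Finset (Rule M))
    (r : Rule M) (C : M) : Prop :=
  (∃ E : Expl M, IsExpl S R C E) ∧ ¬ ∃ E : Expl M, IsExpl S (R.erase r) C E

/-- Rules `r₁, r₂ ∈ R` are mutually essential in `S` for `C`. -/
def MutuallyEssential {M : Type} [DecidableEq M] (S : Finset M) (R : Finset (Rule M))
    (r₁ r₂ : Rule M) (C : M) : Prop :=
  (∃ E : Expl M, IsExpl S (R.erase r₁) C E) ∧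
  (∃ E : Expl M, IsExpl S (R.erase r₂) C E) ∧
  ¬ ∃ E : Expl M, IsExpl S ((R.erase r₁).erase r₂) C E

section Paths

variable {M : Type} [DecidableEq M]

/-- A path in `Gr((R,S₀))`, represented by its list of transition rules from a starting state. -/
inductive IsPath (R : Finset (Rule M)) : Finset M → List (Rule M) → Prop where
  | nil (S : Finset M) : IsPath R S []
  | cons {S : Finset M} {r : Rule M} {rs : List (Rule M)} :
      r ∈ R → r.premises ⊆ S → IsPath R (insert r.concl S) rs → IsPath R S (r :: rs)

/-- A χ-path: a path with no self-loop transitions (each step produces a genuinely new state). -/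
inductive IsChiPath (R : Finset (Rule M)) : Finset M → List (Rule M) → Prop where
  | nil (S : Finset M) : IsChiPath R S []
  | cons {S : Finset M} {r : Rule M} {rs : List (Rule M)} :
      r ∈ R → r.premises ⊆ S → r.concl ∉ S →
      IsChiPath R (insert r.concl S) rs → IsChiPath R S (r :: rs)

/-- `LeadsTo C S rs`: the path `rs` from `S` leads to `C`, i.e. its last produced metabolite
is `C` and its final state is the first state containing `C`. -/
def LeadsTo (C : M) : Finset M → List (Rule M) → Prop
  | _, [] => False
  | S, [r] => C ∉ S ∧ r.concl = C
  | S, r :: rs => C ∉ S ∧ LeadsTo C (insert r.concl S) rs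

/-- The final state of a path. -/
def run (S : Finset M) : List (Rule M) → Finset M
  | [] => S
  | r :: rs => run (insert r.concl S) rs

/-- Auxiliary predicate for ρ-paths: `Xs` accumulates the previously produced metabolites,
`Us` the union of the previous `Ŝᵢ = premises Θᵢ ∩ S₀`, `S` is the current state. -/
def IsRhoAux (R : Finset (Rule M)) (S₀ : Finset M) :
    Finset M → Finset M → Finset M → List (Rule M) → Prop
  | _, _, _, [] => True
  | Xs, Us, S, r :: rs =>
      r ∈ R ∧ r.premises ⊆ S ∧
      (r.concl ∈ S → r.concl ∈ S₀ ∧ r.concl ∉ Xs ∧ r.concl ∉ Us) ∧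
      IsRhoAux R S₀ (insert r.concl Xs) (Us ∪ (r.premises ∩ S₀)) (insert r.concl S) rs

/-- A ρ-path from `S₀` in `Gr((R,S₀))`. -/
def IsRhoPath (R : Finset (Rule M)) (S₀ : Finset M) (rs : List (Rule M)) : Prop :=
  IsRhoAux R S₀ ∅ ∅ S₀ rs

/-- `Ŝ₁ ∪ ⋯ ∪ Ŝ_m`: the union of the parts of `S₀` used by the transitions of the path. -/
def hatUnion (S₀ : Finset M) (rs : List (Rule M)) : Finset M :=
  rs.foldr (fun r acc => (r.premises ∩ S₀) ∪ acc) ∅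

/-- `𝒰(p) = (Ŝ₁ ∪ ⋯ ∪ Ŝ_m) \ {X₁,…,X_m}`. -/
def usedMet (S₀ : Finset M) (rs : List (Rule M)) : Finset M :=
  hatUnion S₀ rs \ (rs.map Rule.concl).toFinset

end Paths


/-!
Explanations and paths of `Gr((R,S₀))` describe the same thing. Along any path every newly
produced metabolite gets an explanation from those of the premises, so the final state of a path
from `S₀` is explained with the rules the path uses. Conversely, traversing an explanation bottom
up and skipping metabolites already present flattens it into a χ-path whose final state contains
the root; cutting such a path at the first state containing `C` makes it lead to `C`.
Hence `C` is explainable without `Θ` iff some χ-path avoiding `Θ` leads to `C`.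
-/

section Paths

variable {M : Type} [DecidableEq M]

theorem run_append (S : Finset M) (rs rs' : List (Rule M)) :
    run S (rs ++ rs') = run (run S rs) rs' := by
  induction rs generalizing S with
  | nil => rfl
  | cons r rs ih => exact ih _

theorem subset_run (S : Finset M) (rs : List (Rule M)) : S ⊆ run S rs := by
  induction rs generalizing S with
  | nil => exact Finset.Subset.refl _
  | cons r rs ih => exact (Finset.subset_insert _ _).trans (ih _)

theorem LeadsTo.mem_run {C : M} {S : Finset M} {rs : List (Rule M)} (h : LeadsTo C S rs) :
    C ∈ run S rs := by
  induction rs generalizing S with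
  | nil => exact h.elim
  | cons r rs ih =>
    cases rs with
    | nil => simp [run, ← h.2]
    | cons r' rs => exact ih h.2

namespace IsChiPath

variable {R : Finset (Rule M)}

theorem isPath {S : Finset M} {rs : List (Rule M)} (h : IsChiPath R S rs) : IsPath R S rs := by
  induction h with
  | nil => exact .nil _
  | cons hr hp _ _ ih => exact .cons hr hp ih

theorem append {S : Finset M} {rs rs' : List (Rule M)} (h : IsChiPath R S rs)
    (h' : IsChiPath R (run S rs) rs') : IsChiPath R S (rs ++ rs') := by
  induction h with
  | nil => exact h'
  | cons hr hp hc _ ih => exact .cons hr hp hc (ih h')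

theorem exists_concl_mem_run {S : Finset M} {rs : List (Rule M)} {r : Rule M}
    (h : IsChiPath R S rs) (hr : r ∈ R) (hp : r.premises ⊆ run S rs) :
    ∃ rs', IsChiPath R S rs' ∧ r.concl ∈ run S rs' := by
  by_cases hc : r.concl ∈ run S rs
  · exact ⟨rs, h, hc⟩
  · refine ⟨rs ++ [r], h.append (.cons hr hp hc (.nil _)), ?_⟩
    simp [run_append, run]

theorem exists_leadsTo {C : M} {S : Finset M} {rs : List (Rule M)} (h : IsChiPath R S rs)
    (hmem : C ∈ run S rs) (hCS : C ∉ S) : ∃ rs', IsChiPath R S rs' ∧ LeadsTo C S rs' := by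
  induction h with
  | nil => exact absurd hmem hCS
  | @cons S r rs hr hp hc _ ih =>
    by_cases hrC : r.concl = C
    · exact ⟨[r], .cons hr hp hc (.nil _), hCS, hrC⟩
    · obtain ⟨rs', hchi, hlead⟩ := ih hmem (by simp [hCS, Ne.symm hrC])
      refine ⟨r :: rs', .cons hr hp hc hchi, ?_⟩
      cases rs' with
      | nil => exact hlead.elim
      | cons r' rs' => exact ⟨hCS, hlead⟩

end IsChiPath

theorem isChiPath_erase_iff {R : Finset (Rule M)} {Θ : Rule M} {S : Finset M}
    {rs : List (Rule M)} : IsChiPath (R.erase Θ) S rs ↔ IsChiPath R S rs ∧ Θ ∉ rs := by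
  constructor
  · intro h
    induction h with
    | nil => exact ⟨.nil _, List.not_mem_nil⟩
    | cons hr hp hc _ ih =>
      obtain ⟨hΘr, hr⟩ := Finset.mem_erase.mp hr
      exact ⟨.cons hr hp hc ih.1, by simp [Ne.symm hΘr, ih.2]⟩
  · rintro ⟨h, hΘ⟩
    induction h with
    | nil => exact .nil _
    | cons hr hp hc _ ih =>
      simp only [List.mem_cons, not_or] at hΘ
      exact .cons (Finset.mem_erase.mpr ⟨Ne.symm hΘ.1, hr⟩) hp hc (ih hΘ.2)

end Paths

section Explanations

variable {M : Type} [DecidableEq M] {S₀ : Finset M} {R : Finset (Rule M)}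

theorem exists_isExpl_concl {r : Rule M} (hr : r ∈ R)
    (hp : ∀ a ∈ r.premises, ∃ E, IsExpl S₀ R a E) : ∃ E, IsExpl S₀ R r.concl E := by
  cases r with
  | binary a₁ a₂ c =>
    obtain ⟨E₁, hE₁⟩ := hp a₁ (by simp [Rule.premises])
    obtain ⟨E₂, hE₂⟩ := hp a₂ (by simp [Rule.premises])
    exact ⟨_, .node2 hr hE₁ hE₂⟩
  | unary a c =>
    obtain ⟨E, hE⟩ := hp a (by simp [Rule.premises])
    exact ⟨_, .node1 hr hE⟩

theorem IsPath.exists_isExpl_of_mem_run {S : Finset M} {rs : List (Rule M)} (h : IsPath R S rs)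
    (hS : ∀ x ∈ S, ∃ E, IsExpl S₀ R x E) {x : M} (hx : x ∈ run S rs) :
    ∃ E, IsExpl S₀ R x E := by
  induction h with
  | nil => exact hS x hx
  | cons hr hp _ ih =>
    refine ih (fun y hy => ?_) hx
    rcases Finset.mem_insert.mp hy with rfl | hy
    · exact exists_isExpl_concl hr fun a ha => hS a (hp ha)
    · exact hS y hy

theorem IsExpl.exists_isChiPath {x : M} {E : Expl M} (h : IsExpl S₀ R x E) {S : Finset M}
    (hS : S₀ ⊆ S) : ∃ rs, IsChiPath R S rs ∧ x ∈ run S rs := by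
  induction h generalizing S with
  | leaf hc => exact ⟨[], .nil _, hS hc⟩
  | node1 hr _ ih =>
    obtain ⟨rs, hchi, ha⟩ := ih hS
    exact hchi.exists_concl_mem_run hr (by simpa [Rule.premises] using ha)
  | node2 hr _ _ ih₁ ih₂ =>
    obtain ⟨rs₁, hchi₁, ha₁⟩ := ih₁ hS
    obtain ⟨rs₂, hchi₂, ha₂⟩ := ih₂ (hS.trans (subset_run S rs₁))
    refine (hchi₁.append hchi₂).exists_concl_mem_run hr ?_
    rw [run_append]
    simp [Rule.premises, Finset.insert_subset_iff, subset_run _ _ ha₁, ha₂]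

end Explanations

theorem stmt8_general {M : Type} [DecidableEq M] (R : Finset (Rule M)) (S₀ : Finset M) (C : M)
    (Θ : Rule M) (hC : C ∉ S₀) (hex : ∃ E : Expl M, IsExpl S₀ R C E) :
    Essential S₀ R Θ C ↔
      ∀ rs : List (Rule M), IsChiPath R S₀ rs → LeadsTo C S₀ rs → Θ ∈ rs := by
  constructor
  · rintro ⟨-, hno⟩ rs hchi hlead
    by_contra hΘ
    have hchi' := isChiPath_erase_iff.mpr ⟨hchi, hΘ⟩
    exact hno (hchi'.isPath.exists_isExpl_of_mem_run (fun x hx => ⟨_, .leaf hx⟩) hlead.mem_run)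
  · refine fun hall => ⟨hex, ?_⟩
    rintro ⟨E, hE⟩
    obtain ⟨rs, hchi, hmem⟩ := hE.exists_isChiPath (Finset.Subset.refl S₀)
    obtain ⟨rs', hchi', hlead⟩ := hchi.exists_leadsTo hmem hC
    obtain ⟨hchiR, hΘ⟩ := isChiPath_erase_iff.mp hchi'
    exact hΘ (hall rs' hchiR hlead)

/-- for `C ∉ S₀` with some explanation, a rule `Θ ∈ R` is essential in `S₀`
for `C` iff every χ-path from `S₀` in `Gr((R,S₀))` leading to `C` contains a transition
labelled by `Θ`. -/
theorem stmt8 {M : Type} [DecidableEq M] (R : Finset (Rule M)) (S₀ : Finset M) (C : M)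
    (Θ : Rule M) (hC : C ∉ S₀) (hex : ∃ E : Expl M, IsExpl S₀ R C E) (hΘ : Θ ∈ R) :
    Essential S₀ R Θ C ↔
      ∀ rs : List (Rule M), IsChiPath R S₀ rs → LeadsTo C S₀ rs → Θ ∈ rs :=
  stmt8_general R S₀ C Θ hC hex
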